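/- arXiv:1607.07291 — 3 statements merged into one kernel-verified Lean document; each statement's English description precedes it below -/
import Mathlib

section
/- A sober Noetherian topological space is countable if and only if it is countably based (second countable). -/
open TopologicalSpace Set

/-- A topological space is Noetherian iff there is no strictly increasing
infinite sequence of open sets. -/
def IsNoetherianTopology (X : Type*) [TopologicalSpace X] : Prop :=
  ¬ ∃ U : ℕ → Set X, (∀ n, IsOpen (U n)) ∧ StrictMono U

/-- A sober Noetherian space is countable iff it is second countable. -/
theorem stmt4 {X : Type*} [TopologicalSpace X] [QuasiSober X] [T0Space X]
    (hN : IsNoetherianTopology X) :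
    Countable X ↔ SecondCountableTopology X := by
  -- First, establish the mathlib `NoetherianSpace` instance.
  have hNS : NoetherianSpace X := by
    refine ⟨RelEmbedding.wellFounded_iff_isEmpty.2 ⟨fun e => ?_⟩⟩
    refine hN ⟨fun n => ((e n : Opens X) : Set X), fun n => (e n).2, ?_⟩
    intro m n h
    have h1 : e m < e n := e.map_rel_iff.2 h
    exact h1
  constructor
  · -- Countable → SecondCountable
    intro hC
    rcases isEmpty_or_nonempty X with hE | hNE
    · have : Finite X := Finite.of_subsingleton
      infer_instance
    have hcl : {s : Set X | IsClosed s}.Countable := by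
      have hsub : {s : Set X | IsClosed s} ⊆ (fun t : Set X => closure t) '' {t | t.Finite} := by
        intro s hs
        obtain ⟨S, hSf, hScl, hSirr, rfl⟩ :=
          NoetherianSpace.exists_finite_set_isClosed_irreducible hs
        have hpt : ∀ Z : Set X, ∃ x : X, Z ∈ S → closure ({x} : Set X) = Z := by
          intro Z
          by_cases hZ : Z ∈ S
          · exact ⟨(hSirr Z hZ).genericPoint,
              fun _ => (hSirr Z hZ).closure_genericPoint (hScl Z hZ)⟩
          · exact ⟨Classical.arbitrary X, fun h => absurd h hZ⟩
        choose f hf using hpt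
        refine ⟨f '' S, hSf.image f, ?_⟩
        have : f '' S = ⋃ Z ∈ S, ({f Z} : Set X) := by
          ext x; simp [Set.image, eq_comm]
        rw [this]
        show closure (⋃ Z ∈ S, ({f Z} : Set X)) = ⋃₀ S
        rw [hSf.closure_biUnion, Set.sUnion_eq_biUnion]
        exact Set.iUnion₂_congr fun Z hZ => hf Z hZ
      exact (Countable.setOf_finite.image _).mono hsub
    have hop : {s : Set X | IsOpen s}.Countable := by
      have : {s : Set X | IsOpen s} = compl '' {s : Set X | IsClosed s} := by
        ext s
        constructor
        · intro hs; exact ⟨sᶜ, isClosed_compl_iff.2 hs, compl_compl s⟩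
        · rintro ⟨t, ht, rfl⟩; exact ht.isOpen_compl
      rw [this]
      exact hcl.image _
    exact ⟨⟨{s : Set X | IsOpen s}, hop, isTopologicalBasis_opens.eq_generateFrom⟩⟩
  · -- SecondCountable → Countable
    intro hSC
    obtain ⟨b, hbc, -, hb⟩ := exists_countable_basis X
    have hop : {s : Set X | IsOpen s}.Countable := by
      have hsub : {s : Set X | IsOpen s} ⊆
          Set.sUnion '' {t : Set (Set X) | t.Finite ∧ t ⊆ b} := by
        intro u hu
        obtain ⟨S, hSb, rfl⟩ := hb.open_eq_sUnion hu
        have hcomp : IsCompact (⋃₀ S) := NoetherianSpace.isCompact _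
        obtain ⟨S', hS'S, hS'f, hS'cov⟩ := hcomp.elim_finite_subcover_image
          (fun v hv => hb.isOpen (hSb hv)) (by rw [Set.sUnion_eq_biUnion])
        refine ⟨S', ⟨hS'f, hS'S.trans hSb⟩, ?_⟩
        apply Set.Subset.antisymm
        · exact Set.sUnion_subset fun v hv =>
            Set.subset_sUnion_of_mem (hS'S hv)
        · intro x hx
          obtain ⟨v, hv, hxv⟩ := Set.mem_iUnion₂.1 (hS'cov hx)
          exact Set.mem_sUnion.2 ⟨v, hv, hxv⟩
      exact ((Set.countable_setOf_finite_subset hbc).image _).mono hsub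
    have hcl : {s : Set X | IsClosed s}.Countable := by
      have : {s : Set X | IsClosed s} = compl '' {s : Set X | IsOpen s} := by
        ext s
        constructor
        · intro hs; exact ⟨sᶜ, isOpen_compl_iff.2 hs, compl_compl s⟩
        · rintro ⟨t, ht, rfl⟩; exact ht.isClosed_compl
      rw [this]
      exact hop.image _
    haveI : Countable {s : Set X // IsClosed s} := hcl.to_subtype
    refine Function.Injective.countable
      (f := fun x : X => (⟨closure {x}, isClosed_closure⟩ : {s : Set X // IsClosed s})) ?_
    intro x y h
    exact (inseparable_iff_closure_eq.2 (congrArg Subtype.val h)).eq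
end

section
/- The continuous image of a sober Noetherian topological space under a continuous surjection is sober. -/
theorem isNoetherianTopology_to_noetherianSpace {X : Type*} [TopologicalSpace X]
    (hN : IsNoetherianTopology X) : TopologicalSpace.NoetherianSpace X := by
  refine ⟨?_⟩
  rw [RelEmbedding.wellFounded_iff_isEmpty]
  by_contra h
  rw [not_isEmpty_iff] at h
  obtain ⟨f⟩ := h
  exact hN ⟨fun n => (f n : Set X), fun n => (f n).2, fun a b hab =>
    Set.lt_iff_ssubset.2 (SetLike.coe_ssubset_coe.2 (f.map_rel_iff.2 hab))⟩

/-- The continuous image of a sober Noetherian space is sober. -/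
theorem stmt8 {X Y : Type*} [TopologicalSpace X] [TopologicalSpace Y]
    [QuasiSober X] (hN : IsNoetherianTopology X)
    (σ : X → Y) (hc : Continuous σ) (hs : Function.Surjective σ) :
    QuasiSober Y := by
  classical
  have : TopologicalSpace.NoetherianSpace X := isNoetherianTopology_to_noetherianSpace hN
  constructor
  intro T hT hT'
  -- preimage of T
  have hpre : IsClosed (σ ⁻¹' T) := hT'.preimage hc
  obtain ⟨S, hSf, hScl, hSi, hSU⟩ :=
    TopologicalSpace.NoetherianSpace.exists_finite_set_isClosed_irreducible hpre
  -- T is covered by closures of images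
  lift S to Finset (Set X) using hSf
  have hcover : T ⊆ ⋃₀ ↑(S.image fun s => closure (σ '' s)) := by
    intro y hy
    obtain ⟨x, rfl⟩ := hs y
    have hx : x ∈ σ ⁻¹' T := hy
    rw [hSU] at hx
    obtain ⟨s, hsS, hxs⟩ := hx
    exact ⟨closure (σ '' s), Finset.mem_coe.2 (Finset.mem_image_of_mem _ hsS),
      subset_closure ⟨x, hxs, rfl⟩⟩
  obtain ⟨z, hzmem, hTz⟩ := (isIrreducible_iff_sUnion_isClosed.1 hT)
    (S.image fun s => closure (σ '' s))
    (by intro z hz; obtain ⟨s, _, rfl⟩ := Finset.mem_image.1 hz; exact isClosed_closure) hcover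
  obtain ⟨s, hsS, rfl⟩ := Finset.mem_image.1 hzmem
  -- s irreducible, get generic point
  have hsirr : IsIrreducible s := hSi s hsS
  obtain ⟨x, hx⟩ := QuasiSober.sober hsirr ((hScl s hsS))
  refine ⟨σ x, ?_⟩
  -- closure {σ x} = T
  have himg : closure (σ '' s) = closure {σ x} := by
    rw [← hx.def, closure_image_closure hc, Set.image_singleton]
  rw [himg] at hTz
  have hzsub : closure {σ x} ⊆ T := by
    apply hT'.closure_subset_iff.2
    rw [Set.singleton_subset_iff]
    have : x ∈ σ ⁻¹' T := by
      rw [hSU]; exact ⟨s, hsS, hx.mem⟩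
    exact this
  exact le_antisymm hzsub hTz
end

section
/- If X is a Baire-like space in which every countable union of Σ⁰₂ sets covering X contains a set with nonempty interior, and X is Noetherian, then every countable cover of X by Δ⁰₂ sets (differences of open sets) admits a finite subcover. -/
/-- A set is locally closed if it is the intersection of an open and a closed set. -/
def IsLocClosed {X : Type*} [TopologicalSpace X] (s : Set X) : Prop :=
  ∃ U C : Set X, IsOpen U ∧ IsClosed C ∧ s = U ∩ C

/-- In a Noetherian space with the Baire-type property that any countable cover
of a nonempty closed subset by locally closed sets contains a set with nonempty
relative interior, every countable cover by locally closed sets has a finite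
subcover. -/
theorem stmt17 {X : Type*} [TopologicalSpace X]
    (hBaire : ∀ C : Set X, IsClosed C → C.Nonempty →
      ∀ A : ℕ → Set X, (∀ i, IsLocClosed (A i)) → C ⊆ ⋃ i, A i →
        ∃ i, ∃ W : Set X, IsOpen W ∧ (W ∩ C).Nonempty ∧ W ∩ C ⊆ A i)
    (hN : IsNoetherianTopology X)
    (A : ℕ → Set X) (hA : ∀ i, IsLocClosed (A i)) (hcov : (⋃ i, A i) = Set.univ) :
    ∃ s : Finset ℕ, (⋃ i ∈ s, A i) = Set.univ := by
  by_contra h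
  set P : Set X → Prop := fun U => IsOpen U ∧ ∃ s : Finset ℕ, U ⊆ ⋃ i ∈ s, A i with hP
  have step : ∀ U, P U → ∃ V, P V ∧ U ⊂ V := by
    rintro U ⟨hUo, s, hUs⟩
    have hUne : U ≠ Set.univ := by
      rintro rfl
      exact h ⟨s, Set.eq_univ_of_univ_subset hUs⟩
    have hCne : Uᶜ.Nonempty := by
      rw [Set.nonempty_compl]; exact hUne
    obtain ⟨i, W, hWo, hWCne, hWC⟩ :=
      hBaire Uᶜ hUo.isClosed_compl hCne A hA (by rw [hcov]; exact Set.subset_univ _)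
    refine ⟨U ∪ W, ⟨hUo.union hWo, insert i s, ?_⟩, ?_⟩
    · intro x hx
      rcases hx with hx | hx
      · have := hUs hx
        simp only [Set.mem_iUnion] at this ⊢
        obtain ⟨j, hj, hxj⟩ := this
        exact ⟨j, Finset.mem_insert_of_mem hj, hxj⟩
      · by_cases hxU : x ∈ U
        · have := hUs hxU
          simp only [Set.mem_iUnion] at this ⊢
          obtain ⟨j, hj, hxj⟩ := this
          exact ⟨j, Finset.mem_insert_of_mem hj, hxj⟩
        · have : x ∈ A i := hWC ⟨hx, hxU⟩
          simp only [Set.mem_iUnion]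
          exact ⟨i, Finset.mem_insert_self i s, this⟩
    · obtain ⟨x, hxW, hxC⟩ := hWCne
      exact ⟨Set.subset_union_left, fun hsub => hxC (hsub (Or.inr hxW))⟩
  have hP0 : P ∅ := ⟨isOpen_empty, ∅, by simp⟩
  choose g hg1 hg2 using step
  let u : ℕ → {U : Set X // P U} := fun n =>
    Nat.rec ⟨∅, hP0⟩ (fun _ p => ⟨g p.1 p.2, hg1 p.1 p.2⟩) n
  refine hN ⟨fun n => (u n).1, fun n => (u n).2.1, ?_⟩
  exact strictMono_nat_of_lt_succ fun n => hg2 (u n).1 (u n).2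
end
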